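/- arXiv:1903.06459 — 3 statements merged into one kernel-verified Lean document; each statement's English description precedes it below -/
import Mathlib

section
/- Let X be a normed space over 𝕜, Z ⊆ X a closed subspace, i : Z → X the inclusion and q : X → X/Z the quotient map. Then the range of the second dual map i** : Z** → X** equals the kernel of the second dual map q** : X** → (X/Z)**, where f** denotes (f*)*. -/
/-!
Every functional on `Z` extends with the same norm (Hahn–Banach), so `i*` is onto with norm-controlled
preimages, and `Z*` is `X*` modulo `ker i*`, the annihilator of `Z`. An element of `X**` therefore
lies in the range of `i**` exactly when it kills `ker i*`. A functional vanishing on `Z` descends to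
`X/Z`, so `ker i* ⊆ range q*`, and every element of `ker q**` kills `ker i*`. The other inclusion
is `q ∘ i = 0`.
-/

open NormedSpace

/-- The dual map `f ↦ f*`, where `f*(g) = g ∘ f`. -/
noncomputable def dualMapCLM {𝕜 : Type*} [RCLike 𝕜] {X Y : Type*} [SeminormedAddCommGroup X]
    [NormedSpace 𝕜 X] [SeminormedAddCommGroup Y] [NormedSpace 𝕜 Y] (f : X →L[𝕜] Y) :
    StrongDual 𝕜 Y →L[𝕜] StrongDual 𝕜 X :=
  (ContinuousLinearMap.compL 𝕜 X Y 𝕜).flip f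

/-- The quotient map `q : X → X/Z` as a continuous linear map. -/
noncomputable def mkQCLM {𝕜 : Type*} [RCLike 𝕜] {X : Type*} [NormedAddCommGroup X]
    [NormedSpace 𝕜 X] (Z : Submodule 𝕜 X) : X →L[𝕜] X ⧸ Z :=
  Z.mkQ.mkContinuous 1 (fun x => by simpa using Submodule.Quotient.norm_mk_le Z x)

theorem LinearMap.exists_comp_eq_of_ker_le {𝕜 E F G : Type*} [NontriviallyNormedField 𝕜]
    [SeminormedAddCommGroup E] [NormedSpace 𝕜 E] [SeminormedAddCommGroup F] [NormedSpace 𝕜 F]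
    [SeminormedAddCommGroup G] [NormedSpace 𝕜 G] (T : E →ₗ[𝕜] F) {C : ℝ}
    (hT : ∀ y, ∃ x, T x = y ∧ ‖x‖ ≤ C * ‖y‖) (φ : E →L[𝕜] G) (h : ker T ≤ ker (φ : E →ₗ[𝕜] G)) :
    ∃ ψ : F →L[𝕜] G, ∀ x, ψ (T x) = φ x := by
  have hsurj : Function.Surjective T := fun y => (hT y).imp fun _ => And.left
  let ψ : F →ₗ[𝕜] G :=
    (ker T).liftQ φ.toLinearMap h ∘ₗ (T.quotKerEquivOfSurjective hsurj).symm.toLinearMap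
  have hψ : ∀ x, ψ (T x) = φ x := fun x => by simp [ψ]
  refine ⟨ψ.mkContinuous (‖φ‖ * C) fun y => ?_, hψ⟩
  obtain ⟨x, rfl, hx⟩ := hT y
  calc ‖ψ (T x)‖ = ‖φ x‖ := by rw [hψ]
    _ ≤ ‖φ‖ * ‖x‖ := φ.le_opNorm x
    _ ≤ ‖φ‖ * (C * ‖T x‖) := by gcongr
    _ = ‖φ‖ * C * ‖T x‖ := by ring

section

variable {𝕜 : Type*} [RCLike 𝕜]

@[simp]
theorem dualMapCLM_apply {X Y : Type*} [SeminormedAddCommGroup X] [NormedSpace 𝕜 X]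
    [SeminormedAddCommGroup Y] [NormedSpace 𝕜 Y] (f : X →L[𝕜] Y) (g : StrongDual 𝕜 Y) :
    dualMapCLM f g = g.comp f :=
  rfl

theorem mkQCLM_comp_subtypeL {X : Type*} [NormedAddCommGroup X] [NormedSpace 𝕜 X]
    (Z : Submodule 𝕜 X) : (mkQCLM Z).comp Z.subtypeL = 0 := by
  ext z
  simp [mkQCLM, (Submodule.Quotient.mk_eq_zero Z).mpr z.2]

theorem ker_dualMapCLM_subtypeL_le_range_dualMapCLM_mkQCLM {X : Type*} [NormedAddCommGroup X]
    [NormedSpace 𝕜 X] (Z : Submodule 𝕜 X) :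
    LinearMap.ker (dualMapCLM Z.subtypeL).toLinearMap ≤
      LinearMap.range (dualMapCLM (mkQCLM Z)).toLinearMap := by
  intro f hf
  have hZ : Z ≤ LinearMap.ker f.toLinearMap := fun z hz => by
    simpa using DFunLike.congr_fun (LinearMap.mem_ker.mp hf) ⟨z, hz⟩
  exact ⟨Z.liftQL f hZ, rfl⟩

theorem mem_range_dualMapCLM_dualMapCLM_subtypeL_of_ker_le {X : Type*}
    [SeminormedAddCommGroup X] [NormedSpace 𝕜 X] (Z : Submodule 𝕜 X)
    (F : StrongDual 𝕜 (StrongDual 𝕜 X))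
    (hF : LinearMap.ker (dualMapCLM Z.subtypeL).toLinearMap ≤ LinearMap.ker F.toLinearMap) :
    F ∈ LinearMap.range (dualMapCLM (dualMapCLM Z.subtypeL)).toLinearMap := by
  have hext : ∀ g : StrongDual 𝕜 Z, ∃ f, dualMapCLM Z.subtypeL f = g ∧ ‖f‖ ≤ 1 * ‖g‖ :=
    fun g => by
      obtain ⟨f, hfg, hnorm⟩ := exists_extension_norm_eq Z g
      exact ⟨f, ContinuousLinearMap.ext hfg, by rw [hnorm, one_mul]⟩
  obtain ⟨Φ, hΦ⟩ := (dualMapCLM Z.subtypeL).toLinearMap.exists_comp_eq_of_ker_le hext F hF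
  exact ⟨Φ, ContinuousLinearMap.ext hΦ⟩

end

theorem range_bidualMap_inclusion_eq_ker_bidualMap_quotient_general {𝕜 : Type*} [RCLike 𝕜]
    {X : Type*} [NormedAddCommGroup X] [NormedSpace 𝕜 X]
    (Z : Submodule 𝕜 X) :
    LinearMap.range (dualMapCLM (dualMapCLM Z.subtypeL)).toLinearMap =
      LinearMap.ker (dualMapCLM (dualMapCLM (mkQCLM Z))).toLinearMap := by
  apply le_antisymm
  · rintro _ ⟨Φ, rfl⟩
    refine LinearMap.mem_ker.mpr (ContinuousLinearMap.ext fun h => ?_)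
    simp [ContinuousLinearMap.comp_assoc, mkQCLM_comp_subtypeL]
  · intro F hF
    refine mem_range_dualMapCLM_dualMapCLM_subtypeL_of_ker_le Z F fun f hf => ?_
    obtain ⟨h, rfl⟩ := ker_dualMapCLM_subtypeL_le_range_dualMapCLM_mkQCLM Z hf
    exact DFunLike.congr_fun (LinearMap.mem_ker.mp hF) h

/-- Let `Z` be a closed subspace of a normed space `X` over `𝕜 ∈ {ℝ, ℂ}`,
`i : Z → X` the inclusion and `q : X → X/Z` the quotient map. Then the range of the second
dual map `i** : Z** → X**` equals the kernel of the second dual map `q** : X** → (X/Z)**`. -/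
theorem range_bidualMap_inclusion_eq_ker_bidualMap_quotient {𝕜 : Type*} [RCLike 𝕜]
    {X : Type*} [NormedAddCommGroup X] [NormedSpace 𝕜 X]
    (Z : Submodule 𝕜 X) (hZ : IsClosed (Z : Set X)) :
    LinearMap.range (dualMapCLM (dualMapCLM Z.subtypeL)).toLinearMap =
      LinearMap.ker (dualMapCLM (dualMapCLM (mkQCLM Z))).toLinearMap :=
  range_bidualMap_inclusion_eq_ker_bidualMap_quotient_general Z
end

section
/- Let X be a normed space over 𝕜, Z ⊆ X a closed subspace and q : X → X/Z the quotient map. Then the dual map q* : (X/Z)* → X* is a linear isometry whose range is exactly the annihilator Z⁰ = {φ ∈ X* : φ vanishes on Z}; consequently (X/Z)* is isometrically isomorphic to Z⁰. -/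
/-!
Every class in `X ⧸ Z` has representatives of norm arbitrarily close to its own norm, so a bound
`‖f (q x)‖ ≤ C ‖x‖` on representatives descends to `‖f y‖ ≤ C ‖y‖` on the quotient. Applied to
`g ∘ q` this gives `‖q* g‖ = ‖g‖`, and applied to the algebraic factorisation `φ = ψ ∘ q` of a
functional `φ` vanishing on `Z` it shows `ψ` is bounded, so `Z⁰` is the range of `q*`.
-/

open NormedSpace

/-- The annihilator `Z⁰ = {φ ∈ X* : φ vanishes on Z}` of a subspace `Z` of `X`, as a
submodule of the continuous dual `X*`. -/
noncomputable def annihilatorCLM {𝕜 : Type*} [RCLike 𝕜] {X : Type*} [NormedAddCommGroup X]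
    [NormedSpace 𝕜 X] (Z : Submodule 𝕜 X) : Submodule 𝕜 (StrongDual 𝕜 X) where
  carrier := {φ : StrongDual 𝕜 X | ∀ x ∈ Z, φ x = 0}
  add_mem' := by intro a b ha hb x hx; simp [ha x hx, hb x hx]
  zero_mem' := by intro x hx; simp
  smul_mem' := by intro c φ hφ x hx; simp [hφ x hx]

namespace Submodule.Quotient

variable {R M F : Type*} [Ring R] [SeminormedAddCommGroup M] [Module R M]
  [SeminormedAddCommGroup F] {S : Submodule R M}

theorem norm_le_of_norm_mk_le (f : M ⧸ S → F) {C : ℝ} (hC : 0 ≤ C)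
    (h : ∀ m, ‖f (mk m)‖ ≤ C * ‖m‖) (x : M ⧸ S) : ‖f x‖ ≤ C * ‖x‖ := by
  rcases hC.eq_or_lt with rfl | hC
  · obtain ⟨m, rfl⟩ := mk_surjective S x
    simpa using h m
  · refine (div_le_iff₀' hC).1 (QuotientAddGroup.le_norm_iff.2 ?_)
    rintro m rfl
    exact (div_le_iff₀' hC).2 (h m)

end Submodule.Quotient

section

variable {𝕜 X F : Type*} [RCLike 𝕜] [NormedAddCommGroup X] [NormedSpace 𝕜 X]
  [SeminormedAddCommGroup F] [NormedSpace 𝕜 F] (Z : Submodule 𝕜 X)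

theorem opNorm_comp_mkQCLM (g : X ⧸ Z →L[𝕜] F) : ‖g.comp (mkQCLM Z)‖ = ‖g‖ := by
  refine le_antisymm ?_ ?_
  · calc ‖g.comp (mkQCLM Z)‖ ≤ ‖g‖ * ‖mkQCLM Z‖ := g.opNorm_comp_le _
      _ ≤ ‖g‖ * 1 := by gcongr; exact LinearMap.mkContinuous_norm_le _ zero_le_one _
      _ = ‖g‖ := mul_one _
  · exact g.opNorm_le_bound (norm_nonneg _)
      (Submodule.Quotient.norm_le_of_norm_mk_le g (norm_nonneg _) (g.comp (mkQCLM Z)).le_opNorm)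

noncomputable def liftQCLM (φ : X →L[𝕜] F) (hφ : ∀ x ∈ Z, φ x = 0) : X ⧸ Z →L[𝕜] F :=
  (Z.liftQ φ.toLinearMap hφ).mkContinuous ‖φ‖
    (Submodule.Quotient.norm_le_of_norm_mk_le _ (norm_nonneg φ) φ.le_opNorm)

theorem liftQCLM_comp_mkQCLM (φ : X →L[𝕜] F) (hφ : ∀ x ∈ Z, φ x = 0) :
    (liftQCLM Z φ hφ).comp (mkQCLM Z) = φ := rfl

theorem dualMapCLM_mkQCLM_mem_annihilatorCLM (g : StrongDual 𝕜 (X ⧸ Z)) :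
    dualMapCLM (mkQCLM Z) g ∈ annihilatorCLM Z := fun _ hx =>
  (congrArg g ((Submodule.Quotient.mk_eq_zero Z).2 hx)).trans (map_zero g)

theorem range_dualMapCLM_mkQCLM :
    Set.range (dualMapCLM (𝕜 := 𝕜) (mkQCLM Z)) = {φ | ∀ x ∈ Z, φ x = 0} :=
  subset_antisymm (Set.range_subset_iff.2 (dualMapCLM_mkQCLM_mem_annihilatorCLM Z))
    fun φ hφ => ⟨liftQCLM Z φ hφ, liftQCLM_comp_mkQCLM Z φ hφ⟩

theorem dualMapCLM_mkQCLM_injective : Function.Injective (dualMapCLM (𝕜 := 𝕜) (mkQCLM Z)) :=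
  fun _ _ h => ContinuousLinearMap.coe_injective <|
    Submodule.linearMap_qext Z (congrArg ContinuousLinearMap.toLinearMap h)

-- `X ⧸ Z` is only seminormed, so Mathlib gives `StrongDual 𝕜 (X ⧸ Z)` no `NormedAddCommGroup`
-- instance and `LinearIsometryEquiv.ofSurjective` does not apply; injectivity comes from `q` onto.
noncomputable def dualMapMkQEquivAnnihilator : StrongDual 𝕜 (X ⧸ Z) ≃ₗᵢ[𝕜] annihilatorCLM Z :=
  { LinearEquiv.ofBijective
      ((dualMapCLM (mkQCLM Z)).toLinearMap.codRestrict _ (dualMapCLM_mkQCLM_mem_annihilatorCLM Z))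
      ⟨fun _ _ h => dualMapCLM_mkQCLM_injective Z (congrArg Subtype.val h),
        fun ⟨φ, hφ⟩ => ⟨liftQCLM Z φ hφ, Subtype.ext (liftQCLM_comp_mkQCLM Z φ hφ)⟩⟩ with
    norm_map' := opNorm_comp_mkQCLM Z }

end

theorem dualMap_quotient_isometry_range_annihilator_general {𝕜 : Type*} [RCLike 𝕜]
    {X : Type*} [NormedAddCommGroup X] [NormedSpace 𝕜 X]
    (Z : Submodule 𝕜 X) :
    (∀ g : StrongDual 𝕜 (X ⧸ Z), ‖dualMapCLM (mkQCLM Z) g‖ = ‖g‖) ∧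
    Set.range ⇑(dualMapCLM (mkQCLM Z)) = {φ : StrongDual 𝕜 X | ∀ x ∈ Z, φ x = 0} ∧
    Nonempty (StrongDual 𝕜 (X ⧸ Z) ≃ₗᵢ[𝕜] annihilatorCLM Z) :=
  ⟨opNorm_comp_mkQCLM Z, range_dualMapCLM_mkQCLM Z, ⟨dualMapMkQEquivAnnihilator Z⟩⟩

/-- Let `Z` be a closed subspace of a normed space `X` over `𝕜 ∈ {ℝ, ℂ}` and
`q : X → X/Z` the quotient map. Then the dual map `q* : (X/Z)* → X*` is a linear isometry whose
range is exactly the annihilator `Z⁰`; consequently `(X/Z)*` is isometrically isomorphic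
to `Z⁰`. -/
theorem dualMap_quotient_isometry_range_annihilator {𝕜 : Type*} [RCLike 𝕜]
    {X : Type*} [NormedAddCommGroup X] [NormedSpace 𝕜 X]
    (Z : Submodule 𝕜 X) (hZ : IsClosed (Z : Set X)) :
    (∀ g : StrongDual 𝕜 (X ⧸ Z), ‖dualMapCLM (mkQCLM Z) g‖ = ‖g‖) ∧
    Set.range ⇑(dualMapCLM (mkQCLM Z)) = {φ : StrongDual 𝕜 X | ∀ x ∈ Z, φ x = 0} ∧
    Nonempty (StrongDual 𝕜 (X ⧸ Z) ≃ₗᵢ[𝕜] annihilatorCLM Z) :=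
  dualMap_quotient_isometry_range_annihilator_general Z
end

section
/- Let X be a normed space over 𝕜, Z ⊆ X a closed subspace, i : Z → X the inclusion and q : X → X/Z the quotient map. Then the second dual map q** : X** → (X/Z)** is surjective, its kernel equals the range of i** : Z** → X**, and the induced map from the quotient Banach space X** / range(i**) to (X/Z)** is an isometric isomorphism; that is, (X/Z)** ≅ X**/Z** isometrically (identifying Z** with the range of the closed monomorphism i**). -/
/-!
Dualise `0 → Z → X → X/Z → 0` twice. By Hahn–Banach the dual of an isometric embedding is a
metric quotient map: it has norm at most one and every functional has a preimage of no larger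
norm. The dual `q*` of the quotient map is an isometric embedding whose range is the annihilator
`ker i*` of `Z`, so `q**` is a metric quotient map, and such a map induces an isometric
isomorphism `X** ⧸ ker q** ≃ (X/Z)**`. A functional on `X*` lies in `ker q**` iff it vanishes on
`ker i*`, i.e. iff it factors through the metric quotient map `i*`: this is `ker q** = range i**`.
-/

open NormedSpace

section Quotient

variable {𝕜 : Type*} [RCLike 𝕜] {E F G : Type*} [SeminormedAddCommGroup E] [NormedSpace 𝕜 E]
  [SeminormedAddCommGroup F] [NormedSpace 𝕜 F] [SeminormedAddCommGroup G] [NormedSpace 𝕜 G]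

theorem Submodule.norm_liftQL_le (K : Submodule 𝕜 E) (f : E →L[𝕜] G) (hf : K ≤ f.ker) :
    ‖K.liftQL f hf‖ ≤ ‖f‖ := by
  let fₕ := f.toLinearMap.toAddMonoidHom.mkNormedAddGroupHom ‖f‖ f.le_opNorm
  refine ContinuousLinearMap.opNorm_le_bound _ (norm_nonneg f) fun y => ?_
  calc ‖K.liftQL f hf y‖ ≤ ‖fₕ‖ * ‖y‖ := QuotientAddGroup.norm_lift_apply_le fₕ hf y
    _ ≤ ‖f‖ * ‖y‖ := by
      gcongr
      exact NormedAddGroupHom.mkNormedAddGroupHom_norm_le _ (norm_nonneg f) _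

theorem exists_linearIsometryEquiv_quotient_ker (T : E →L[𝕜] F) (hT : ‖T‖ ≤ 1)
    (hlift : ∀ y, ∃ x, T x = y ∧ ‖x‖ ≤ ‖y‖) :
    ∃ e : (E ⧸ LinearMap.ker (T : E →ₗ[𝕜] F)) ≃ₗᵢ[𝕜] F,
      ∀ x, e (Submodule.Quotient.mk x) = T x := by
  set K := LinearMap.ker (T : E →ₗ[𝕜] F)
  let l := K.liftQL T le_rfl
  have hl : ∀ x, l (Submodule.Quotient.mk x) = T x := fun _ => rfl
  have hbij : Function.Bijective l := by
    refine ⟨LinearMap.ker_eq_bot.mp (K.ker_liftQ_eq_bot _ _ le_rfl), fun y => ?_⟩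
    obtain ⟨x, rfl, -⟩ := hlift y
    exact ⟨_, hl x⟩
  refine ⟨⟨LinearEquiv.ofBijective l.toLinearMap hbij, fun y => le_antisymm ?_ ?_⟩, hl⟩
  · calc ‖l y‖ ≤ ‖l‖ * ‖y‖ := l.le_opNorm y
      _ ≤ ‖y‖ := mul_le_of_le_one_left (norm_nonneg y) ((K.norm_liftQL_le _ _).trans hT)
  · obtain ⟨x, rfl⟩ := K.mkQ_surjective y
    obtain ⟨x', hx', hx'_le⟩ := hlift (T x)
    have hmk : K.mkQ x' = K.mkQ x := (Submodule.Quotient.eq K).mpr (by simp [K, hx'])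
    calc ‖K.mkQ x‖ = ‖K.mkQ x'‖ := by rw [hmk]
      _ ≤ ‖x'‖ := Submodule.Quotient.norm_mk_le _ _
      _ ≤ ‖T x‖ := hx'_le
      _ = ‖l (K.mkQ x)‖ := (congrArg norm (hl x)).symm

theorem exists_comp_eq_of_ker_le (T : E →L[𝕜] F) (hT : ‖T‖ ≤ 1)
    (hlift : ∀ y, ∃ x, T x = y ∧ ‖x‖ ≤ ‖y‖) (Φ : E →L[𝕜] G) (hΦ : T.ker ≤ Φ.ker) :
    ∃ ξ : F →L[𝕜] G, ξ.comp T = Φ := by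
  obtain ⟨e, he⟩ := exists_linearIsometryEquiv_quotient_ker T hT hlift
  refine ⟨(T.ker.liftQL Φ hΦ).comp e.symm.toContinuousLinearEquiv.toContinuousLinearMap, ?_⟩
  ext x
  have hx : e.symm (T x) = Submodule.Quotient.mk x := e.symm_apply_eq.mpr (he x).symm
  simp [hx]

end Quotient

section Dual

variable {𝕜 : Type*} [RCLike 𝕜] {E F : Type*} [SeminormedAddCommGroup E] [NormedSpace 𝕜 E]
  [SeminormedAddCommGroup F] [NormedSpace 𝕜 F]

theorem norm_dualMapCLM_le (f : E →L[𝕜] F) : ‖dualMapCLM f‖ ≤ ‖f‖ :=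
  ContinuousLinearMap.opNorm_le_bound _ (norm_nonneg f) fun g =>
    (g.opNorm_comp_le f).trans_eq (mul_comm _ _)

theorem dualMapCLM_injective {f : E →L[𝕜] F} (hf : Function.Surjective f) :
    Function.Injective (dualMapCLM f) := fun g₁ g₂ h =>
  ContinuousLinearMap.ext fun y => by
    obtain ⟨x, rfl⟩ := hf y
    exact DFunLike.congr_fun h x

theorem exists_dualMapCLM_eq_of_linearIsometry (L : E →ₗᵢ[𝕜] F) (hL : Function.Injective L)
    (g : StrongDual 𝕜 E) :
    ∃ f : StrongDual 𝕜 F, dualMapCLM L.toContinuousLinearMap f = g ∧ ‖f‖ ≤ ‖g‖ := by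
  let e : E ≃ₗᵢ[𝕜] LinearMap.range L.toLinearMap :=
    { LinearEquiv.ofInjective L.toLinearMap hL with norm_map' := L.norm_map }
  obtain ⟨f, hf, hf_norm⟩ :=
    exists_extension_norm_eq _ (g.comp e.symm.toContinuousLinearEquiv.toContinuousLinearMap)
  refine ⟨f, ?_, ?_⟩
  · ext x
    have hx : f (e x) = g x := by simpa using hf (e x)
    exact hx
  · rw [hf_norm]
    exact (g.opNorm_comp_le _).trans
      (mul_le_of_le_one_right (norm_nonneg g) e.symm.toLinearIsometry.norm_toContinuousLinearMap_le)

end Dual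

section Subspace

variable {𝕜 : Type*} [RCLike 𝕜] {X : Type*} [NormedAddCommGroup X] [NormedSpace 𝕜 X]
  (Z : Submodule 𝕜 X)

theorem norm_mkQCLM_le : ‖mkQCLM (𝕜 := 𝕜) Z‖ ≤ 1 :=
  Z.mkQ.mkContinuous_norm_le zero_le_one _

theorem le_ker_dualMapCLM_mkQCLM (g : StrongDual 𝕜 (X ⧸ Z)) :
    Z ≤ (dualMapCLM (mkQCLM Z) g).ker := fun _ hz =>
  (congrArg g ((Submodule.Quotient.mk_eq_zero Z).mpr hz)).trans (map_zero g)

theorem dualMapCLM_mkQCLM_liftQL (f : StrongDual 𝕜 X) (hf : Z ≤ f.ker) :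
    dualMapCLM (mkQCLM Z) (Z.liftQL f hf) = f :=
  rfl

theorem norm_dualMapCLM_mkQCLM (g : StrongDual 𝕜 (X ⧸ Z)) :
    ‖dualMapCLM (mkQCLM Z) g‖ = ‖g‖ := by
  refine le_antisymm
    ((g.opNorm_comp_le _).trans (mul_le_of_le_one_right (norm_nonneg g) (norm_mkQCLM_le Z))) ?_
  have hg : Z.liftQL _ (le_ker_dualMapCLM_mkQCLM Z g) = g := by
    ext y
    induction y using Submodule.Quotient.induction_on
    rfl
  exact hg ▸ Z.norm_liftQL_le _ _

theorem exists_dualMapCLM_dualMapCLM_mkQCLM_eq (Ψ : StrongDual 𝕜 (StrongDual 𝕜 (X ⧸ Z))) :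
    ∃ Φ : StrongDual 𝕜 (StrongDual 𝕜 X),
      dualMapCLM (dualMapCLM (mkQCLM Z)) Φ = Ψ ∧ ‖Φ‖ ≤ ‖Ψ‖ :=
  let q' : StrongDual 𝕜 (X ⧸ Z) →ₗᵢ[𝕜] StrongDual 𝕜 X :=
    { toLinearMap := (dualMapCLM (mkQCLM Z) : StrongDual 𝕜 (X ⧸ Z) →ₗ[𝕜] StrongDual 𝕜 X)
      norm_map' := norm_dualMapCLM_mkQCLM Z }
  exists_dualMapCLM_eq_of_linearIsometry q' (dualMapCLM_injective Z.mkQ_surjective) Ψ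

theorem ker_dualMapCLM_dualMapCLM_mkQCLM :
    LinearMap.ker (dualMapCLM (dualMapCLM (mkQCLM Z)) :
        StrongDual 𝕜 (StrongDual 𝕜 X) →ₗ[𝕜] StrongDual 𝕜 (StrongDual 𝕜 (X ⧸ Z))) =
      LinearMap.range (dualMapCLM (dualMapCLM Z.subtypeL) :
        StrongDual 𝕜 (StrongDual 𝕜 Z) →ₗ[𝕜] StrongDual 𝕜 (StrongDual 𝕜 X)) := by
  refine le_antisymm (fun Φ hΦ => ?_) ?_
  · have hker : (dualMapCLM Z.subtypeL).ker ≤ Φ.ker := fun f hf => by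
      have hfZ : Z ≤ f.ker := fun z hz =>
        LinearMap.mem_ker.mpr (DFunLike.congr_fun (LinearMap.mem_ker.mp hf) ⟨z, hz⟩)
      rw [LinearMap.mem_ker, ← dualMapCLM_mkQCLM_liftQL Z f hfZ]
      exact DFunLike.congr_fun (LinearMap.mem_ker.mp hΦ) _
    exact exists_comp_eq_of_ker_le _ ((norm_dualMapCLM_le _).trans Z.norm_subtypeL_le)
      (exists_dualMapCLM_eq_of_linearIsometry Z.subtypeₗᵢ Subtype.val_injective) Φ hker
  · rintro _ ⟨ξ, rfl⟩
    ext g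
    have hg : (dualMapCLM Z.subtypeL) (dualMapCLM (mkQCLM Z) g) = 0 := by
      ext z
      exact LinearMap.mem_ker.mp (le_ker_dualMapCLM_mkQCLM Z g z.2)
    exact (congrArg ξ hg).trans (map_zero ξ)

end Subspace

theorem bidual_quotient_iso_general {𝕜 : Type*} [RCLike 𝕜]
    {X : Type*} [NormedAddCommGroup X] [NormedSpace 𝕜 X]
    (Z : Submodule 𝕜 X) :
    Function.Surjective ⇑(dualMapCLM (dualMapCLM (mkQCLM Z))) ∧
    LinearMap.ker ((dualMapCLM (dualMapCLM (mkQCLM Z)) : StrongDual 𝕜 (StrongDual 𝕜 X) →ₗ[𝕜] StrongDual 𝕜 (StrongDual 𝕜 (X ⧸ Z)))) =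
      LinearMap.range ((dualMapCLM (dualMapCLM Z.subtypeL) : StrongDual 𝕜 (StrongDual 𝕜 Z) →ₗ[𝕜] StrongDual 𝕜 (StrongDual 𝕜 X))) ∧
    ∃ e : (StrongDual 𝕜 (StrongDual 𝕜 X) ⧸ LinearMap.range ((dualMapCLM (dualMapCLM Z.subtypeL) : StrongDual 𝕜 (StrongDual 𝕜 Z) →ₗ[𝕜] StrongDual 𝕜 (StrongDual 𝕜 X))))
        ≃ₗᵢ[𝕜] StrongDual 𝕜 (StrongDual 𝕜 (X ⧸ Z)),
      ∀ ξ : StrongDual 𝕜 (StrongDual 𝕜 X),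
        e (Submodule.Quotient.mk ξ) = dualMapCLM (dualMapCLM (mkQCLM Z)) ξ := by
  have hlift := exists_dualMapCLM_dualMapCLM_mkQCLM_eq Z
  have hker := ker_dualMapCLM_dualMapCLM_mkQCLM Z
  have hnorm : ‖dualMapCLM (dualMapCLM (mkQCLM Z))‖ ≤ 1 :=
    (norm_dualMapCLM_le _).trans ((norm_dualMapCLM_le _).trans (norm_mkQCLM_le Z))
  refine ⟨fun Ψ => (hlift Ψ).imp fun _ => And.left, hker, ?_⟩
  rw [← hker]
  exact exists_linearIsometryEquiv_quotient_ker _ hnorm hlift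

/-- Let `Z` be a closed subspace of a normed space `X` over `𝕜 ∈ {ℝ, ℂ}`,
`i : Z → X` the inclusion and `q : X → X/Z` the quotient map. Then `q** : X** → (X/Z)**`
is surjective, its kernel is the range of `i** : Z** → X**`, and the induced map
`X** / range(i**) → (X/Z)**` is an isometric isomorphism; that is,
`(X/Z)** ≅ X**/Z**` isometrically (identifying `Z**` with the range of `i**`). -/
theorem bidual_quotient_iso {𝕜 : Type*} [RCLike 𝕜]
    {X : Type*} [NormedAddCommGroup X] [NormedSpace 𝕜 X]
    (Z : Submodule 𝕜 X) (hZ : IsClosed (Z : Set X)) :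
    Function.Surjective ⇑(dualMapCLM (dualMapCLM (mkQCLM Z))) ∧
    LinearMap.ker ((dualMapCLM (dualMapCLM (mkQCLM Z)) : StrongDual 𝕜 (StrongDual 𝕜 X) →ₗ[𝕜] StrongDual 𝕜 (StrongDual 𝕜 (X ⧸ Z)))) =
      LinearMap.range ((dualMapCLM (dualMapCLM Z.subtypeL) : StrongDual 𝕜 (StrongDual 𝕜 Z) →ₗ[𝕜] StrongDual 𝕜 (StrongDual 𝕜 X))) ∧
    ∃ e : (StrongDual 𝕜 (StrongDual 𝕜 X) ⧸ LinearMap.range ((dualMapCLM (dualMapCLM Z.subtypeL) : StrongDual 𝕜 (StrongDual 𝕜 Z) →ₗ[𝕜] StrongDual 𝕜 (StrongDual 𝕜 X))))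
        ≃ₗᵢ[𝕜] StrongDual 𝕜 (StrongDual 𝕜 (X ⧸ Z)),
      ∀ ξ : StrongDual 𝕜 (StrongDual 𝕜 X),
        e (Submodule.Quotient.mk ξ) = dualMapCLM (dualMapCLM (mkQCLM Z)) ξ :=
  bidual_quotient_iso_general Z
end
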